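/- Let Q be a finite quiver without cycles of length m, with starting set S and associated quiver Q', and let n' = span Path(Q') ⊆ n_Q. Suppose D ∈ Der(n') satisfies: (a) D is diagonal with respect to the basis Path(Q') (i.e. every path in Path(Q') is an eigenvector of D), and (b) D∘f = f∘D for every f ∈ Aut(Q') (acting linearly on n' via its action on Path(Q')). Then the linear extension D̄ of D to n_Q defined by D̄|_{span S} = 0 is a derivation of n_Q. -/

import Mathlib

open scoped Classical

noncomputable section

variable {V E : Type*}

/-- A (positive-length) path in the quiver `(V, E, s, t)`: a nonempty list of arrows
in which consecutive arrows are composable, i.e. `t αᵢ = s αᵢ₊₁`. -/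
def IsPath (s t : E → V) (l : List E) : Prop :=
  l ≠ [] ∧ l.Chain' (fun a b => t a = s b)

/-- The source of a (nonempty) list of arrows, as an `Option`. -/
def src? (s : E → V) (l : List E) : Option V := l.head?.map s

/-- The target of a (nonempty) list of arrows, as an `Option`. -/
def tgt? (t : E → V) (l : List E) : Option V := l.getLast?.map t

/-- The quiver has no cycles: there is no path whose source equals its target. -/
def NoCycles (s t : E → V) : Prop :=
  ∀ l : List E, IsPath s t l → src? s l ≠ tgt? t l

/-- `m` is the maximum of the lengths of paths of the quiver (the length of the quiver). -/
def IsMaxPathLen (s t : E → V) (m : ℕ) : Prop :=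
  (∃ l : List E, IsPath s t l ∧ l.length = m) ∧ ∀ l : List E, IsPath s t l → l.length ≤ m

/-- The set `Path(Q)` of all paths of length `≥ 1`, as a subtype of lists of arrows. -/
abbrev PathQ (s t : E → V) := {l : List E // IsPath s t l}

/-- The underlying vector space of the Lie algebra `n_Q` obtained from the quiver:
the real vector space with basis `Path(Q)`. -/
abbrev nQ (s t : E → V) := PathQ s t →₀ ℝ

/-- The Lie bracket of two basis paths: `[x, y] = xy` if the concatenation `xy` is a path,
`[x, y] = -yx` if the concatenation `yx` is a path, and `[x, y] = 0` otherwise. -/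
def braBasis (s t : E → V) (x y : PathQ s t) : nQ s t :=
  if h : IsPath s t (x.val ++ y.val) then Finsupp.single ⟨x.val ++ y.val, h⟩ 1
  else if h' : IsPath s t (y.val ++ x.val) then -Finsupp.single ⟨y.val ++ x.val, h'⟩ 1
  else 0

/-- The Lie bracket of `n_Q`, extended bilinearly from basis paths. -/
def bra (s t : E → V) (u v : nQ s t) : nQ s t :=
  u.sum fun x cx => v.sum fun y cy => (cx * cy) • braBasis s t x y

/-- The span of all brackets of elements of two subspaces of `n_Q`. -/
def braSpan (s t : E → V) (M N : Submodule ℝ (nQ s t)) : Submodule ℝ (nQ s t) :=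
  Submodule.span ℝ {z | ∃ u ∈ M, ∃ v ∈ N, z = bra s t u v}

/-- The starting set `S` of a quiver of length `m`: the set of arrows `a` such that
`a x` is a path of length `m` for some path `x`. -/
def startSet (s t : E → V) (m : ℕ) : Set E :=
  {a | ∃ x : List E, IsPath s t x ∧ IsPath s t (a :: x) ∧ (a :: x).length = m}

/-- The arrow set `E' = (E ∖ S) ∪ {ab ∈ Path(Q) : a ∈ S, b ∈ E}` of the quiver `Q'`,
realized as a set of lists of arrows of `Q`. -/
def edgesQ' (s t : E → V) (m : ℕ) : Set (List E) :=
  {l | (∃ a : E, a ∉ startSet s t m ∧ l = [a]) ∨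
       (∃ a b : E, a ∈ startSet s t m ∧ IsPath s t [a, b] ∧ l = [a, b])}

/-- `L` is a decomposition of the list `l` of arrows as a path of the quiver `Q'`:
a nonempty chain of consecutively composable `Q'`-arrows whose concatenation is `l`. -/
def IsDecompQ' (s t : E → V) (m : ℕ) (L : List (List E)) (l : List E) : Prop :=
  L ≠ [] ∧ (∀ p ∈ L, p ∈ edgesQ' s t m) ∧
    L.Chain' (fun p q => tgt? t p = src? s q) ∧ L.flatten = l

/-- `l` underlies a path of the quiver `Q'`. -/
def IsPathQ' (s t : E → V) (m : ℕ) (l : List E) : Prop :=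
  ∃ L : List (List E), IsDecompQ' s t m L l

/-- `f : E → E` is an automorphism of the quiver `(V, E, s, t)`. -/
def IsQuivAut (s t : E → V) (f : E → E) : Prop :=
  Function.Bijective f ∧ ∀ x y : E, (t x = s y ↔ t (f x) = s (f y))

/-- `g` is an automorphism of the quiver whose arrow set is the set `ES` of lists of
arrows of `Q` (such as the quiver `Q'` with arrow set `edgesQ'`). -/
def IsQuivAutOn (s t : E → V) (ES : Set (List E)) (g : List E → List E) : Prop :=
  Set.BijOn g ES ES ∧
    ∀ p ∈ ES, ∀ q ∈ ES, (tgt? t p = src? s q ↔ tgt? t (g p) = src? s (g q))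

/-- The subspace `n' = span Path(Q')` of `n_Q`. -/
def nQ'span (s t : E → V) (m : ℕ) : Submodule ℝ (nQ s t) :=
  Submodule.span ℝ {u | ∃ p : PathQ s t, IsPathQ' s t m p.val ∧ u = Finsupp.single p 1}

/-- A single arrow, regarded as a path of length one. -/
def edgePath (s t : E → V) (a : E) : PathQ s t := ⟨[a], by simp [IsPath]; exact List.isChain_singleton _⟩

/-- The linear map `T` on `n_Q` realizes the action of `g ∈ Aut(Q')` on `Path(Q')`:
if the path `p` of `Q'` is mapped to the path `q` by applying `g` piecewise to a
decomposition of `p` into `Q'`-arrows, then `T p = q`. -/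
def ActsAsOnQ' (s t : E → V) (m : ℕ) (g : List E → List E)
    (T : nQ s t →ₗ[ℝ] nQ s t) : Prop :=
  ∀ p q : PathQ s t,
    (∃ L : List (List E), IsDecompQ' s t m L p.val ∧ (L.map g).flatten = q.val) →
    T (Finsupp.single p 1) = Finsupp.single q 1


/-!
Every path of `Q` is either a single arrow of `S` or a path of `Q'`, so by bilinearity it suffices
to check the Leibniz rule on pairs of basis paths, and only pairs involving an arrow `a ∈ S` are
new. Nothing ends where `a` starts (that would give a path longer than `m`), so `[a, b] = 0` for
`b ∈ S`, and for a `Q'`-path `q` the only possible bracket is `[a, q] = aq`. Since `D̄ a = 0`, the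
Leibniz rule for `(a, q)` says that `aq` and `q` have the same `D`-eigenvalue. Writing `q = b r`
with `b ∉ S`, the `Q'`-path `aq` is `(ab) r`; eigenvalues are additive along concatenation because
`D` is a derivation of `n'`, and `ab` and `b` have the same eigenvalue because swapping the
`Q'`-arrows `ab` and `b` is an automorphism of `Q'`, which `D` commutes with.
-/

section Bracket

variable (s t : E → V)

def braLinear : nQ s t →ₗ[ℝ] nQ s t →ₗ[ℝ] nQ s t :=
  Finsupp.lsum ℝ fun x => LinearMap.toSpanSingleton ℝ (nQ s t →ₗ[ℝ] nQ s t)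
    (Finsupp.linearCombination ℝ (braBasis s t x))

theorem braLinear_apply (u v : nQ s t) : braLinear s t u v = bra s t u v := by
  rw [bra, braLinear, Finsupp.lsum_apply, Finsupp.sum, Finsupp.sum, LinearMap.sum_apply]
  refine Finset.sum_congr rfl fun x _ => ?_
  rw [LinearMap.toSpanSingleton_apply, LinearMap.smul_apply,
    Finsupp.linearCombination_apply, Finsupp.smul_sum, Finsupp.sum]
  exact Finset.sum_congr rfl fun y _ => (mul_smul _ _ _).symm

theorem bra_single_single (p q : PathQ s t) :
    bra s t (Finsupp.single p 1) (Finsupp.single q 1) = braBasis s t p q := by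
  rw [← braLinear_apply, braLinear, Finsupp.lsum_single, LinearMap.toSpanSingleton_apply,
    LinearMap.smul_apply, Finsupp.linearCombination_single, one_smul, one_smul]

@[simp] theorem bra_zero_left (v : nQ s t) : bra s t 0 v = 0 := by
  rw [← braLinear_apply]; simp

@[simp] theorem bra_zero_right (u : nQ s t) : bra s t u 0 = 0 := by
  rw [← braLinear_apply]; simp

theorem bra_smul_left (c : ℝ) (u v : nQ s t) : bra s t (c • u) v = c • bra s t u v := by
  rw [← braLinear_apply, ← braLinear_apply]; simp

theorem bra_smul_right (c : ℝ) (u v : nQ s t) : bra s t u (c • v) = c • bra s t u v := by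
  rw [← braLinear_apply, ← braLinear_apply]; simp

theorem bra_leibniz_of_single (D : nQ s t →ₗ[ℝ] nQ s t)
    (h : ∀ p q : PathQ s t, D (bra s t (Finsupp.single p 1) (Finsupp.single q 1)) =
      bra s t (D (Finsupp.single p 1)) (Finsupp.single q 1) +
        bra s t (Finsupp.single p 1) (D (Finsupp.single q 1)))
    (u v : nQ s t) : D (bra s t u v) = bra s t (D u) v + bra s t u (D v) := by
  have hext : (braLinear s t).compr₂ D =
      (braLinear s t).comp D + (braLinear s t).compl₂ D := by
    refine Finsupp.lhom_ext fun p cp => Finsupp.lhom_ext fun q cq => ?_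
    rw [← Finsupp.smul_single_one p cp, ← Finsupp.smul_single_one q cq]
    simp only [LinearMap.compr₂_apply, LinearMap.add_apply, LinearMap.comp_apply,
      LinearMap.compl₂_apply, map_smul, LinearMap.smul_apply, braLinear_apply, h, smul_add]
  simpa only [LinearMap.compr₂_apply, LinearMap.add_apply, LinearMap.comp_apply,
    LinearMap.compl₂_apply, braLinear_apply] using LinearMap.congr_fun₂ hext u v

variable {s t}

theorem braBasis_of_isPath {x y : PathQ s t} (h : IsPath s t (x.val ++ y.val)) :
    braBasis s t x y = Finsupp.single ⟨x.val ++ y.val, h⟩ 1 :=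
  dif_pos h

theorem braBasis_of_not_isPath {x y : PathQ s t} (hxy : ¬IsPath s t (x.val ++ y.val))
    (hyx : ¬IsPath s t (y.val ++ x.val)) : braBasis s t x y = 0 := by
  rw [braBasis, dif_neg hxy, dif_neg hyx]

theorem braBasis_eq_neg_swap {x y : PathQ s t} (hxy : ¬IsPath s t (x.val ++ y.val)) :
    braBasis s t x y = -braBasis s t y x := by
  by_cases hyx : IsPath s t (y.val ++ x.val)
  · rw [braBasis, dif_neg hxy, dif_pos hyx, braBasis_of_isPath hyx]
  · rw [braBasis_of_not_isPath hxy hyx, braBasis_of_not_isPath hyx hxy, neg_zero]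

end Bracket

section Paths

variable {s t : E → V}

theorem isPath_singleton (a : E) : IsPath s t [a] :=
  ⟨List.cons_ne_nil _ _, List.isChain_singleton _⟩

theorem isPath_cons_cons {a b : E} {l : List E} :
    IsPath s t (a :: b :: l) ↔ t a = s b ∧ IsPath s t (b :: l) :=
  ⟨fun h => ⟨(List.isChain_cons_cons.mp h.2).1, List.cons_ne_nil _ _,
      (List.isChain_cons_cons.mp h.2).2⟩,
    fun ⟨hab, h⟩ => ⟨List.cons_ne_nil _ _, List.isChain_cons_cons.mpr ⟨hab, h.2⟩⟩⟩

theorem isPath_pair {a b : E} : IsPath s t [a, b] ↔ t a = s b := by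
  simp [isPath_cons_cons, isPath_singleton]

theorem isPath_append {l₁ l₂ : List E} (h₁ : IsPath s t l₁) (h₂ : IsPath s t l₂) :
    IsPath s t (l₁ ++ l₂) ↔ tgt? t l₁ = src? s l₂ := by
  obtain ⟨x, hx⟩ := Option.ne_none_iff_exists'.mp (List.getLast?_eq_none_iff.not.mpr h₁.1)
  obtain ⟨y, hy⟩ := Option.ne_none_iff_exists'.mp (List.head?_eq_none_iff.not.mpr h₂.1)
  have hc₁ : l₁.IsChain (fun a b => t a = s b) := h₁.2
  have hc₂ : l₂.IsChain (fun a b => t a = s b) := h₂.2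
  show (l₁ ++ l₂ ≠ [] ∧ (l₁ ++ l₂).IsChain (fun a b => t a = s b)) ↔ _
  rw [and_iff_right (by simp [h₁.1]), List.isChain_append]
  simp [hc₁, hc₂, tgt?, src?, hx, hy]

variable {m : ℕ}

theorem tgt_ne_src_of_mem_startSet (hm : IsMaxPathLen s t m) {a : E}
    (ha : a ∈ startSet s t m) {l : List E} (hl : IsPath s t l) : tgt? t l ≠ some (s a) := by
  obtain ⟨x, -, hax, hlen⟩ := ha
  intro hla
  have hlong := hm.2 _ ((isPath_append hl hax).mpr (by simpa [src?] using hla))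
  rw [List.length_append, hlen] at hlong
  exact hl.1 (List.length_eq_zero_iff.mp (by omega))

theorem not_isPath_append_of_mem_startSet (hm : IsMaxPathLen s t m) {a : E}
    (ha : a ∈ startSet s t m) {l : List E} (hl : IsPath s t l) : ¬IsPath s t (l ++ [a]) :=
  fun h => tgt_ne_src_of_mem_startSet hm ha hl ((isPath_append hl (isPath_singleton a)).mp h)

theorem not_mem_startSet_of_isPath_pair (hm : IsMaxPathLen s t m) {a b : E}
    (hab : IsPath s t [a, b]) : b ∉ startSet s t m :=
  fun hb => not_isPath_append_of_mem_startSet hm hb (isPath_singleton a) hab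

theorem mem_startSet_of_tgt_eq {a c : E} (ha : a ∈ startSet s t m) (hca : t c = t a) :
    c ∈ startSet s t m := by
  obtain ⟨x, hx, hax, hlen⟩ := ha
  refine ⟨x, hx, ?_, by simpa using hlen⟩
  obtain ⟨b, x, rfl⟩ := List.exists_cons_of_ne_nil hx.1
  rw [isPath_cons_cons] at hax ⊢
  exact ⟨hca.trans hax.1, hax.2⟩

theorem tgt_ne_of_mem_edgesQ' (hm : IsMaxPathLen s t m) {a : E} (ha : a ∈ startSet s t m)
    {p : List E} (hp : p ∈ edgesQ' s t m) : tgt? t p ≠ some (t a) := by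
  rcases hp with ⟨c, hc, rfl⟩ | ⟨c, d, -, hcd, rfl⟩ <;> intro h <;>
    simp only [tgt?, List.getLast?_singleton, List.getLast?_cons_cons, Option.map_some,
      Option.some.injEq] at h
  · exact hc (mem_startSet_of_tgt_eq ha h)
  · exact not_mem_startSet_of_isPath_pair hm hcd (mem_startSet_of_tgt_eq ha h)

end Paths

section Decomposition

variable {s t : E → V} {m : ℕ}

theorem ne_nil_of_mem_edgesQ' {p : List E} (hp : p ∈ edgesQ' s t m) : p ≠ [] := by
  rcases hp with ⟨a, -, rfl⟩ | ⟨a, b, -, -, rfl⟩ <;> exact List.cons_ne_nil _ _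

theorem isPath_of_mem_edgesQ' {p : List E} (hp : p ∈ edgesQ' s t m) : IsPath s t p := by
  rcases hp with ⟨a, -, rfl⟩ | ⟨a, b, -, hab, rfl⟩
  exacts [isPath_singleton a, hab]

theorem eq_of_append_eq_append_of_mem_edgesQ' {p₁ p₂ r₁ r₂ : List E}
    (h₁ : p₁ ∈ edgesQ' s t m) (h₂ : p₂ ∈ edgesQ' s t m) (h : p₁ ++ r₁ = p₂ ++ r₂) : p₁ = p₂ := by
  rcases h₁ with ⟨a₁, ha₁, rfl⟩ | ⟨a₁, b₁, ha₁, -, rfl⟩ <;>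
    rcases h₂ with ⟨a₂, ha₂, rfl⟩ | ⟨a₂, b₂, ha₂, -, rfl⟩ <;>
      simp only [List.cons_append, List.nil_append, List.cons.injEq] at h
  · rw [h.1]
  · exact absurd (h.1 ▸ ha₂) ha₁
  · exact absurd (h.1 ▸ ha₁) ha₂
  · rw [h.1, h.2.1]

theorem eq_of_flatten_eq_of_mem_edgesQ' {L₁ L₂ : List (List E)}
    (h₁ : ∀ p ∈ L₁, p ∈ edgesQ' s t m) (h₂ : ∀ p ∈ L₂, p ∈ edgesQ' s t m)
    (h : L₁.flatten = L₂.flatten) : L₁ = L₂ := by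
  induction L₁ generalizing L₂ with
  | nil =>
    obtain _ | ⟨p, L₂⟩ := L₂
    · rfl
    · exact absurd (List.append_eq_nil_iff.mp h.symm).1 (ne_nil_of_mem_edgesQ' (h₂ p (by simp)))
  | cons p₁ L₁ ih =>
    obtain _ | ⟨p₂, L₂⟩ := L₂
    · exact absurd (List.append_eq_nil_iff.mp h).1 (ne_nil_of_mem_edgesQ' (h₁ p₁ (by simp)))
    · simp only [List.flatten_cons] at h
      obtain rfl := eq_of_append_eq_append_of_mem_edgesQ' (h₁ p₁ (by simp)) (h₂ p₂ (by simp)) h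
      rw [ih (fun p hp => h₁ p (by simp [hp])) (fun p hp => h₂ p (by simp [hp]))
        (List.append_cancel_left h)]

theorem IsDecompQ'.unique {L₁ L₂ : List (List E)} {l : List E} (h₁ : IsDecompQ' s t m L₁ l)
    (h₂ : IsDecompQ' s t m L₂ l) : L₁ = L₂ :=
  eq_of_flatten_eq_of_mem_edgesQ' h₁.2.1 h₂.2.1 (h₁.2.2.2.trans h₂.2.2.2.symm)

theorem isDecompQ'_singleton {p : List E} (hp : p ∈ edgesQ' s t m) : IsDecompQ' s t m [p] p :=
  ⟨List.cons_ne_nil _ _, by simpa using hp, List.isChain_singleton _, List.flatten_singleton⟩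

theorem IsDecompQ'.src_eq {L : List (List E)} {l p : List E} (h : IsDecompQ' s t m L l)
    (hp : p ∈ L.head?) : src? s l = src? s p := by
  obtain ⟨L, rfl⟩ : ∃ L', L = p :: L' := by
    cases L <;> simp_all
  rw [← h.2.2.2, List.flatten_cons, src?, src?,
    List.head?_append_of_ne_nil _ (ne_nil_of_mem_edgesQ' (h.2.1 p (by simp)))]

theorem IsDecompQ'.tail {p : List E} {L : List (List E)} {l : List E}
    (h : IsDecompQ' s t m (p :: L) l) (hL : L ≠ []) : IsDecompQ' s t m L L.flatten :=
  ⟨hL, fun q hq => h.2.1 q (by simp [hq]), h.2.2.1.tail, rfl⟩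

theorem IsDecompQ'.cons {p : List E} {L : List (List E)} {l : List E}
    (hp : p ∈ edgesQ' s t m) (h : IsDecompQ' s t m L l) (hpl : tgt? t p = src? s l) :
    IsDecompQ' s t m (p :: L) (p ++ l) := by
  refine ⟨List.cons_ne_nil _ _, ?_, ?_, by rw [List.flatten_cons, h.2.2.2]⟩
  · simpa [hp] using h.2.1
  · exact List.isChain_cons.mpr ⟨fun q hq => hpl.trans (h.src_eq hq), h.2.2.1⟩

theorem IsDecompQ'.replace_head {p p' : List E} {L : List (List E)} {l : List E}
    (h : IsDecompQ' s t m (p :: L) l) (hp' : p' ∈ edgesQ' s t m) (htgt : tgt? t p' = tgt? t p) :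
    IsDecompQ' s t m (p' :: L) (p' ++ L.flatten) := by
  refine ⟨List.cons_ne_nil _ _, ?_, ?_, List.flatten_cons⟩
  · simpa [hp'] using fun q hq => h.2.1 q (by simp [hq])
  · have hchain := List.isChain_cons.mp h.2.2.1
    exact List.isChain_cons.mpr ⟨fun q hq => htgt.trans (hchain.1 q hq), hchain.2⟩

theorem IsDecompQ'.isPath {L : List (List E)} {l : List E} (h : IsDecompQ' s t m L l) :
    IsPath s t l := by
  induction L generalizing l with
  | nil => exact absurd rfl h.1
  | cons p L ih =>
    have hp := isPath_of_mem_edgesQ' (h.2.1 p (by simp))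
    rw [← h.2.2.2, List.flatten_cons]
    rcases eq_or_ne L [] with rfl | hL
    · simpa using hp
    · have hL' := h.tail hL
      obtain ⟨q, hq⟩ := Option.ne_none_iff_exists'.mp (List.head?_eq_none_iff.not.mpr hL)
      refine (isPath_append hp (ih hL')).mpr ?_
      rw [hL'.src_eq (Option.mem_def.mpr hq)]
      exact (List.isChain_cons.mp h.2.2.1).1 q hq

theorem IsPathQ'.isPath {l : List E} (h : IsPathQ' s t m l) : IsPath s t l :=
  h.choose_spec.isPath

theorem IsDecompQ'.cons_of_mem_startSet (hm : IsMaxPathLen s t m) {a : E}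
    (ha : a ∈ startSet s t m) {L : List (List E)} {l : List E} (h : IsDecompQ' s t m L l)
    (hal : IsPath s t (a :: l)) :
    ∃ b L', L = [b] :: L' ∧ IsDecompQ' s t m ([a, b] :: L') (a :: l) := by
  obtain _ | ⟨p, L⟩ := L
  · exact absurd rfl h.1
  have hl : l = p ++ L.flatten := by rw [← h.2.2.2, List.flatten_cons]
  rcases h.2.1 p (by simp) with ⟨b, hb, rfl⟩ | ⟨c, d, hc, -, rfl⟩
  · have hab : IsPath s t [a, b] := isPath_pair.mpr (isPath_cons_cons.mp (hl ▸ hal)).1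
    refine ⟨b, L, rfl, ?_⟩
    rw [hl]
    exact h.replace_head (.inr ⟨a, b, ha, hab, rfl⟩) (by simp [tgt?])
  · have hac : t a = s c := (isPath_cons_cons.mp (hl ▸ hal)).1
    exact absurd (isPath_pair.mpr hac)
      (not_isPath_append_of_mem_startSet hm hc (isPath_singleton a))

theorem IsPathQ'.cons (hm : IsMaxPathLen s t m) {a : E} {l : List E} (hl : IsPathQ' s t m l)
    (hal : IsPath s t (a :: l)) : IsPathQ' s t m (a :: l) := by
  obtain ⟨L, hL⟩ := hl
  by_cases ha : a ∈ startSet s t m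
  · obtain ⟨b, L', -, hdec⟩ := hL.cons_of_mem_startSet hm ha hal
    exact ⟨_, hdec⟩
  · exact ⟨_, hL.cons (.inl ⟨a, ha, rfl⟩) ((isPath_append (isPath_singleton a) hL.isPath).mp hal)⟩

theorem eq_singleton_or_isPathQ' (hm : IsMaxPathLen s t m) :
    ∀ {l : List E}, IsPath s t l → (∃ a ∈ startSet s t m, l = [a]) ∨ IsPathQ' s t m l
  | [], h => absurd rfl h.1
  | [a], _ => by
    by_cases ha : a ∈ startSet s t m
    · exact .inl ⟨a, ha, rfl⟩
    · exact .inr ⟨[[a]], isDecompQ'_singleton (.inl ⟨a, ha, rfl⟩)⟩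
  | a :: b :: l, h => by
    have hbl := (isPath_cons_cons.mp h).2
    refine .inr (IsPathQ'.cons hm ((eq_singleton_or_isPathQ' hm hbl).resolve_left ?_) h)
    rintro ⟨c, hc, hbc⟩
    obtain ⟨rfl, rfl⟩ := List.cons_eq_cons.mp hbc
    exact not_mem_startSet_of_isPath_pair hm h hc

theorem eq_edgePath_or_isPathQ' (hm : IsMaxPathLen s t m) (p : PathQ s t) :
    (∃ a ∈ startSet s t m, p = edgePath s t a) ∨ IsPathQ' s t m p.val :=
  (eq_singleton_or_isPathQ' hm p.2).imp_left fun ⟨a, ha, hpa⟩ => ⟨a, ha, Subtype.ext hpa⟩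

end Decomposition

section Automorphisms

variable {s t : E → V} {m : ℕ}

theorem exists_actsAsOnQ' (g : List E → List E) : ∃ T, ActsAsOnQ' s t m g T := by
  let F : PathQ s t → PathQ s t := fun p =>
    if h : ∃ q : PathQ s t, ∃ L, IsDecompQ' s t m L p.val ∧ (L.map g).flatten = q.val
    then h.choose else p
  refine ⟨Finsupp.lmapDomain ℝ ℝ F, fun p q hpq => ?_⟩
  rw [Finsupp.lmapDomain_apply, Finsupp.mapDomain_single]
  have hex : ∃ q : PathQ s t, ∃ L, IsDecompQ' s t m L p.val ∧ (L.map g).flatten = q.val :=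
    ⟨q, hpq⟩
  obtain ⟨L', hL', hq'⟩ := hex.choose_spec
  obtain ⟨L, hL, hq⟩ := hpq
  have hFp : F p = q := by
    simp only [F, dif_pos hex]
    exact Subtype.ext (hq'.symm.trans (hL'.unique hL ▸ hq))
  rw [hFp]

theorem isQuivAutOn_swap {ES : Set (List E)} {x y : List E} (hx : x ∈ ES) (hy : y ∈ ES)
    (htgt : tgt? t x = tgt? t y) (hx_in : ∀ p ∈ ES, tgt? t p ≠ src? s x)
    (hy_in : ∀ p ∈ ES, tgt? t p ≠ src? s y) : IsQuivAutOn s t ES (Equiv.swap x y) := by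
  have hmaps : Set.MapsTo (Equiv.swap x y) ES ES := by
    intro p hp
    rcases eq_or_ne p x with rfl | hpx
    · simpa using hy
    rcases eq_or_ne p y with rfl | hpy
    · simpa using hx
    simpa [Equiv.swap_apply_of_ne_of_ne hpx hpy] using hp
  have hinv : Set.InvOn (Equiv.swap x y) (Equiv.swap x y) ES ES :=
    ⟨fun p _ => Equiv.swap_apply_self x y p, fun p _ => Equiv.swap_apply_self x y p⟩
  have htgt_swap : ∀ p, tgt? t (Equiv.swap x y p) = tgt? t p := by
    intro p
    rcases eq_or_ne p x with rfl | hpx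
    · simp [htgt]
    rcases eq_or_ne p y with rfl | hpy
    · simp [htgt]
    rw [Equiv.swap_apply_of_ne_of_ne hpx hpy]
  refine ⟨hinv.bijOn hmaps hmaps, fun p hp q _ => ?_⟩
  rw [htgt_swap]
  rcases eq_or_ne q x with rfl | hqx
  · simp only [Equiv.swap_apply_left]
    exact iff_of_false (hx_in p hp) (hy_in p hp)
  rcases eq_or_ne q y with rfl | hqy
  · simp only [Equiv.swap_apply_right]
    exact iff_of_false (hy_in p hp) (hx_in p hp)
  rw [Equiv.swap_apply_of_ne_of_ne hqx hqy]

end Automorphisms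

def IsDerivationOn (s t : E → V) (N : Submodule ℝ (nQ s t)) (D : nQ s t →ₗ[ℝ] nQ s t) : Prop :=
  ∀ u ∈ N, ∀ v ∈ N, D (bra s t u v) = bra s t (D u) v + bra s t u (D v)

def IsDiagonalOnQ' (s t : E → V) (m : ℕ) (D : nQ s t →ₗ[ℝ] nQ s t) : Prop :=
  ∀ p : PathQ s t, IsPathQ' s t m p.val → ∃ c : ℝ, D (Finsupp.single p 1) = c • Finsupp.single p 1

def CommutesWithAutQ' (s t : E → V) (m : ℕ) (D : nQ s t →ₗ[ℝ] nQ s t) : Prop :=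
  ∀ g : List E → List E, IsQuivAutOn s t (edgesQ' s t m) g →
    ∀ T : nQ s t →ₗ[ℝ] nQ s t, ActsAsOnQ' s t m g T → ∀ u ∈ nQ'span s t m, D (T u) = T (D u)

section Eigenvalues

variable {s t : E → V} {m : ℕ}

/-- The diagonal entry of `D` at `l`, with junk value `0` when `l` is not a path. -/
def eigval (D : nQ s t →ₗ[ℝ] nQ s t) (l : List E) : ℝ :=
  if h : IsPath s t l then D (Finsupp.single ⟨l, h⟩ 1) ⟨l, h⟩ else 0

variable {D : nQ s t →ₗ[ℝ] nQ s t}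

theorem single_mem_nQ'span {p : PathQ s t} (hp : IsPathQ' s t m p.val) :
    Finsupp.single p (1 : ℝ) ∈ nQ'span s t m :=
  Submodule.subset_span ⟨p, hp, rfl⟩

theorem IsDiagonalOnQ'.apply_single (hdiag : IsDiagonalOnQ' s t m D) {p : PathQ s t}
    (hp : IsPathQ' s t m p.val) : D (Finsupp.single p 1) = eigval D p.val • Finsupp.single p 1 := by
  obtain ⟨c, hc⟩ := hdiag p hp
  rw [eigval, dif_pos p.2, hc]
  simp

theorem eigval_append (hD : IsDerivationOn s t (nQ'span s t m) D)
    (hdiag : IsDiagonalOnQ' s t m D) {l₁ l₂ : List E} (h₁ : IsPathQ' s t m l₁)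
    (h₂ : IsPathQ' s t m l₂) (h : IsPath s t (l₁ ++ l₂)) :
    eigval D (l₁ ++ l₂) = eigval D l₁ + eigval D l₂ := by
  let p₁ : PathQ s t := ⟨l₁, h₁.isPath⟩
  let p₂ : PathQ s t := ⟨l₂, h₂.isPath⟩
  have hleib := hD _ (single_mem_nQ'span (p := p₁) h₁) _ (single_mem_nQ'span (p := p₂) h₂)
  rw [bra_single_single, hdiag.apply_single h₁, hdiag.apply_single h₂, bra_smul_left,
    bra_smul_right, bra_single_single, braBasis_of_isPath h] at hleib
  rw [eigval, dif_pos h, hleib]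
  simp [p₁, p₂]

theorem eigval_pair (hm : IsMaxPathLen s t m) (hdiag : IsDiagonalOnQ' s t m D)
    (hcomm : CommutesWithAutQ' s t m D) {a b : E} (ha : a ∈ startSet s t m)
    (hab : IsPath s t [a, b]) : eigval D [a, b] = eigval D [b] := by
  have hb_edge : [b] ∈ edgesQ' s t m := .inl ⟨b, not_mem_startSet_of_isPath_pair hm hab, rfl⟩
  have hab_edge : [a, b] ∈ edgesQ' s t m := .inr ⟨a, b, ha, hab, rfl⟩
  have hb : IsPathQ' s t m [b] := ⟨_, isDecompQ'_singleton hb_edge⟩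
  have hab' : IsPathQ' s t m [a, b] := ⟨_, isDecompQ'_singleton hab_edge⟩
  -- `[b]` and `[a, b]` both end at `t b` and nothing ends at `s b = t a` or at `s a`.
  have hswap : IsQuivAutOn s t (edgesQ' s t m) (Equiv.swap [b] [a, b]) :=
    isQuivAutOn_swap hb_edge hab_edge (by simp [tgt?])
      (fun p hp => by simpa [src?, ← isPath_pair.mp hab] using tgt_ne_of_mem_edgesQ' hm ha hp)
      (fun p hp => by
        simpa [src?] using tgt_ne_src_of_mem_startSet hm ha (isPath_of_mem_edgesQ' hp))
  obtain ⟨T, hT⟩ := exists_actsAsOnQ' (s := s) (t := t) (m := m) (Equiv.swap [b] [a, b])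
  let pb : PathQ s t := ⟨[b], isPath_singleton b⟩
  let pab : PathQ s t := ⟨[a, b], hab⟩
  have hTb : T (Finsupp.single pb 1) = Finsupp.single pab 1 :=
    hT _ _ ⟨_, isDecompQ'_singleton hb_edge, by simp [pb, pab]⟩
  have hDT := hcomm _ hswap T hT _ (single_mem_nQ'span (p := pb) hb)
  rw [hTb, hdiag.apply_single (p := pab) hab', hdiag.apply_single (p := pb) hb, map_smul,
    hTb] at hDT
  exact smul_left_injective ℝ (Finsupp.single_ne_zero.mpr one_ne_zero) hDT

theorem eigval_cons (hm : IsMaxPathLen s t m) (hD : IsDerivationOn s t (nQ'span s t m) D)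
    (hdiag : IsDiagonalOnQ' s t m D) (hcomm : CommutesWithAutQ' s t m D) {a : E}
    (ha : a ∈ startSet s t m) {l : List E} (hl : IsPathQ' s t m l) (hal : IsPath s t (a :: l)) :
    eigval D (a :: l) = eigval D l := by
  obtain ⟨L, hL⟩ := hl
  obtain ⟨b, L, rfl, hdec⟩ := hL.cons_of_mem_startSet hm ha hal
  have hab : IsPath s t [a, b] := isPath_of_mem_edgesQ' (hdec.2.1 _ (by simp))
  have hb : IsPathQ' s t m [b] := ⟨_, isDecompQ'_singleton (hL.2.1 _ (by simp))⟩
  have hab' : IsPathQ' s t m [a, b] := ⟨_, isDecompQ'_singleton (hdec.2.1 _ (by simp))⟩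
  have hl : l = [b] ++ L.flatten := by rw [← hL.2.2.2, List.flatten_cons]
  subst hl
  rcases eq_or_ne L [] with rfl | hL_ne
  · exact eigval_pair hm hdiag hcomm ha hab
  have hr : IsPathQ' s t m L.flatten := ⟨_, hL.tail hL_ne⟩
  rw [← List.cons_append, eigval_append hD hdiag hab' hr hdec.isPath,
    eigval_append hD hdiag hb hr hL.isPath, eigval_pair hm hdiag hcomm ha hab]

end Eigenvalues

section StartingArrows

variable {s t : E → V} {m : ℕ} {D : nQ s t →ₗ[ℝ] nQ s t}

theorem bra_edgePath_edgePath (hm : IsMaxPathLen s t m) {a b : E} (ha : a ∈ startSet s t m)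
    (hb : b ∈ startSet s t m) :
    bra s t (Finsupp.single (edgePath s t a) 1) (Finsupp.single (edgePath s t b) 1) = 0 := by
  rw [bra_single_single, braBasis_of_not_isPath
    (not_isPath_append_of_mem_startSet hm hb (isPath_singleton a))
    (not_isPath_append_of_mem_startSet hm ha (isPath_singleton b))]

theorem map_bra_edgePath_left (hm : IsMaxPathLen s t m)
    (hD : IsDerivationOn s t (nQ'span s t m) D) (hdiag : IsDiagonalOnQ' s t m D)
    (hcomm : CommutesWithAutQ' s t m D) {a : E} (ha : a ∈ startSet s t m) {q : PathQ s t}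
    (hq : IsPathQ' s t m q.val) :
    D (bra s t (Finsupp.single (edgePath s t a) 1) (Finsupp.single q 1)) =
      bra s t (Finsupp.single (edgePath s t a) 1) (D (Finsupp.single q 1)) := by
  rw [hdiag.apply_single hq, bra_smul_right, bra_single_single]
  by_cases haq : IsPath s t (a :: q.val)
  · rw [braBasis_of_isPath haq, hdiag.apply_single (hq.cons hm haq)]
    exact congrArg (· • _) (eigval_cons hm hD hdiag hcomm ha hq haq)
  · rw [braBasis_of_not_isPath haq (not_isPath_append_of_mem_startSet hm ha q.2), map_zero,
      smul_zero]

theorem map_bra_edgePath_right (hm : IsMaxPathLen s t m)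
    (hD : IsDerivationOn s t (nQ'span s t m) D) (hdiag : IsDiagonalOnQ' s t m D)
    (hcomm : CommutesWithAutQ' s t m D) {b : E} (hb : b ∈ startSet s t m) {p : PathQ s t}
    (hp : IsPathQ' s t m p.val) :
    D (bra s t (Finsupp.single p 1) (Finsupp.single (edgePath s t b) 1)) =
      bra s t (D (Finsupp.single p 1)) (Finsupp.single (edgePath s t b) 1) := by
  have hanti : bra s t (Finsupp.single p 1) (Finsupp.single (edgePath s t b) 1) =
      -bra s t (Finsupp.single (edgePath s t b) 1) (Finsupp.single p 1) := by
    rw [bra_single_single, bra_single_single,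
      braBasis_eq_neg_swap (not_isPath_append_of_mem_startSet hm hb p.2)]
  rw [hanti, map_neg, map_bra_edgePath_left hm hD hdiag hcomm hb hp, hdiag.apply_single hp,
    bra_smul_left, bra_smul_right, hanti, smul_neg]

end StartingArrows

theorem extension_by_zero_is_derivation_general (s t : E → V)
    (m : ℕ) (hm : IsMaxPathLen s t m)
    (D : nQ s t →ₗ[ℝ] nQ s t)
    (hD0 : ∀ a ∈ startSet s t m, D (Finsupp.single (edgePath s t a) 1) = 0)
    (hDder : ∀ u ∈ nQ'span s t m, ∀ v ∈ nQ'span s t m,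
      D (bra s t u v) = bra s t (D u) v + bra s t u (D v))
    (hdiag : ∀ p : PathQ s t, IsPathQ' s t m p.val →
      ∃ c : ℝ, D (Finsupp.single p 1) = c • Finsupp.single p 1)
    (hcomm : ∀ g : List E → List E, IsQuivAutOn s t (edgesQ' s t m) g →
      ∀ T : nQ s t →ₗ[ℝ] nQ s t, ActsAsOnQ' s t m g T →
        ∀ u ∈ nQ'span s t m, D (T u) = T (D u)) :
    ∀ u v : nQ s t, D (bra s t u v) = bra s t (D u) v + bra s t u (D v) := by
  refine bra_leibniz_of_single s t D fun p q => ?_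
  rcases eq_edgePath_or_isPathQ' hm p with ⟨a, ha, rfl⟩ | hp <;>
    rcases eq_edgePath_or_isPathQ' hm q with ⟨b, hb, rfl⟩ | hq
  · rw [bra_edgePath_edgePath hm ha hb, hD0 a ha, hD0 b hb, map_zero, bra_zero_left,
      bra_zero_right, add_zero]
  · rw [hD0 a ha, bra_zero_left, zero_add, map_bra_edgePath_left hm hDder hdiag hcomm ha hq]
  · rw [hD0 b hb, bra_zero_right, add_zero, map_bra_edgePath_right hm hDder hdiag hcomm hb hp]
  · exact hDder _ (single_mem_nQ'span hp) _ (single_mem_nQ'span hq)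

/-- Let `Q` be a finite quiver without cycles of length `m` and let
`D̄` be the linear endomorphism of `n_Q` vanishing on `span S` and restricting on
`n' = span Path(Q')` to a derivation of `n'` which is diagonal with respect to the
basis `Path(Q')` and commutes with every automorphism of `Q'`. Then `D̄` is a
derivation of `n_Q`. -/
theorem extension_by_zero_is_derivation [Finite V] [Finite E] (s t : E → V)
    (hQ : NoCycles s t) (m : ℕ) (hm : IsMaxPathLen s t m)
    (D : nQ s t →ₗ[ℝ] nQ s t)
    (hD0 : ∀ a ∈ startSet s t m, D (Finsupp.single (edgePath s t a) 1) = 0)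
    (hDmem : ∀ u ∈ nQ'span s t m, D u ∈ nQ'span s t m)
    (hDder : ∀ u ∈ nQ'span s t m, ∀ v ∈ nQ'span s t m,
      D (bra s t u v) = bra s t (D u) v + bra s t u (D v))
    (hdiag : ∀ p : PathQ s t, IsPathQ' s t m p.val →
      ∃ c : ℝ, D (Finsupp.single p 1) = c • Finsupp.single p 1)
    (hcomm : ∀ g : List E → List E, IsQuivAutOn s t (edgesQ' s t m) g →
      ∀ T : nQ s t →ₗ[ℝ] nQ s t, ActsAsOnQ' s t m g T →
        ∀ u ∈ nQ'span s t m, D (T u) = T (D u)) :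
    ∀ u v : nQ s t, D (bra s t u v) = bra s t (D u) v + bra s t u (D v) :=
  extension_by_zero_is_derivation_general s t m hm D hD0 hDder hdiag hcomm

end
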